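/- For every positive integer n, ∫₀^{ϖ/2} sl^{4n}(t) dt = [∏_{j=1}^{n} (4j−3)/(4j−1)] · ϖ/2, i.e. ∫₀^{ϖ/2} sl^{4n}(t) dt = (1/3)·(5/7)·(9/11)·⋯·((4n−3)/(4n−1))·ϖ/2. -/

import Mathlib

/-!
Substituting `t = arcsin_{p,q} y` turns `∫₀^{π_{p,q}/2} f(sin_{p,q} t) dt` into
`∫₀¹ f(y) (1 - y^q)^(-1/p) dy`, so the integral of `sl^{4n}` is the moment `M_{4n}` of the
weight `(1 - y⁴)^(-1/2)` on `[0,1]`, and `M_0 = ϖ/2`. Differentiating `y^(k+1) (1 - y^q)^(1 - 1/p)`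
gives the Wallis-type recursion `(k + 1 + q(1 - 1/p)) M_{k+q} = (k + 1) M_k`, which for
`p = 2`, `q = 4`, `k = 4m` is `M_{4m+4} = (4m+1)/(4m+3) · M_{4m}`.
-/

open Set MeasureTheory Filter

/-- Generalized arcsine: `arcsin_{p,q}(x) = ∫₀ˣ (1 - tᵠ)^(-1/p) dt`. -/
noncomputable def gArcsin (p q x : ℝ) : ℝ := ∫ t in (0:ℝ)..x, (1 - t ^ q) ^ (-(1 / p))

/-- Generalized pi: `π_{p,q} = 2 ∫₀¹ (1 - tᵠ)^(-1/p) dt`. -/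
noncomputable def gPi (p q : ℝ) : ℝ := 2 * gArcsin p q 1

/-- `S` is the generalized sine `sin_{p,q}` (the inverse of `gArcsin p q` on `[0,1]`). -/
def IsGSin (p q : ℝ) (S : ℝ → ℝ) : Prop :=
  ∀ y ∈ Icc (0:ℝ) 1, S (gArcsin p q y) = y

/-- `C` is the generalized cosine `cos_{p,q}`, the derivative of `S = sin_{p,q}`
on `[0, π_{p,q}/2]`. -/
def IsGCos (p q : ℝ) (S C : ℝ → ℝ) : Prop :=
  ∀ x ∈ Icc (0:ℝ) (gPi p q / 2), HasDerivWithinAt S (C x) (Icc (0:ℝ) (gPi p q / 2)) x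

noncomputable def gWeight (p q t : ℝ) : ℝ := (1 - t ^ q) ^ (-(1 / p))

section Weight

variable {p q : ℝ}

theorem gArcsin_eq_integral_gWeight (x : ℝ) :
    gArcsin p q x = ∫ t in (0:ℝ)..x, gWeight p q t := rfl

theorem gArcsin_zero : gArcsin p q 0 = 0 := intervalIntegral.integral_same

theorem gPi_div_two : gPi p q / 2 = gArcsin p q 1 := by
  rw [gPi]; ring

theorem measurable_gWeight : Measurable (gWeight p q) :=
  (measurable_const.sub (measurable_id.pow_const q)).pow_const _

theorem gWeight_nonneg (hq : 0 ≤ q) {t : ℝ} (ht : t ∈ Icc (0:ℝ) 1) : 0 ≤ gWeight p q t :=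
  Real.rpow_nonneg (sub_nonneg.2 (Real.rpow_le_one ht.1 ht.2 hq)) _

theorem gWeight_pos (hq : 0 < q) {t : ℝ} (ht : t ∈ Ico (0:ℝ) 1) : 0 < gWeight p q t :=
  Real.rpow_pos_of_pos (sub_pos.2 (Real.rpow_lt_one ht.1 ht.2 hq)) _

theorem gWeight_le_one_sub_rpow (hp : 0 < p) (hq : 1 ≤ q) {t : ℝ} (ht : t ∈ Ioc (0:ℝ) 1) :
    gWeight p q t ≤ (1 - t) ^ (-(1 / p)) := by
  rcases ht.2.eq_or_lt with rfl | ht1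
  · simp [gWeight]
  · exact Real.rpow_le_rpow_of_nonpos (sub_pos.2 ht1)
      (by linarith [Real.rpow_le_self_of_le_one ht.1.le ht.2 hq]) (by simp; positivity)

theorem intervalIntegrable_gWeight (hp : 1 < p) (hq : 1 ≤ q) :
    IntervalIntegrable (gWeight p q) volume 0 1 := by
  have hsing : IntervalIntegrable (fun t : ℝ => (1 - t) ^ (-(1 / p))) volume 0 1 := by
    have h := (intervalIntegral.intervalIntegrable_rpow' (a := 0) (b := 1)
      (r := -(1 / p)) (by rw [neg_lt_neg_iff, div_lt_one (by linarith)]; exact hp))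
    simpa using (h.comp_sub_left 1).symm
  refine hsing.mono_fun measurable_gWeight.aestronglyMeasurable ?_
  rw [uIoc_of_le zero_le_one]
  filter_upwards [ae_restrict_mem measurableSet_Ioc] with t ht
  rw [Real.norm_of_nonneg (gWeight_nonneg (by linarith) (Ioc_subset_Icc_self ht)),
    Real.norm_of_nonneg (Real.rpow_nonneg (sub_nonneg.2 ht.2) _)]
  exact gWeight_le_one_sub_rpow (by linarith) hq ht

theorem intervalIntegrable_rpow_mul_gWeight (hp : 1 < p) (hq : 1 ≤ q) {k : ℝ} (hk : 0 ≤ k) :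
    IntervalIntegrable (fun t => t ^ k * gWeight p q t) volume 0 1 := by
  refine (intervalIntegrable_gWeight hp hq).mono_fun
    ((measurable_id.pow_const k).mul measurable_gWeight).aestronglyMeasurable ?_
  rw [uIoc_of_le zero_le_one]
  filter_upwards [ae_restrict_mem measurableSet_Ioc] with t ht
  have hw := gWeight_nonneg (p := p) (q := q) (by linarith) (Ioc_subset_Icc_self ht)
  rw [norm_mul, Real.norm_of_nonneg hw, Real.norm_of_nonneg (Real.rpow_nonneg ht.1.le _)]
  exact mul_le_of_le_one_left hw (Real.rpow_le_one ht.1.le ht.2 hk)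

theorem hasDerivAt_gArcsin (hp : 1 < p) (hq : 1 ≤ q) {x : ℝ} (hx : x ∈ Ioo (0:ℝ) 1) :
    HasDerivAt (gArcsin p q) (gWeight p q x) x := by
  have hcont : ContinuousAt (gWeight p q) x :=
    (continuousAt_const.sub (Real.continuousAt_rpow_const x q (Or.inl hx.1.ne'))).rpow_const
      (Or.inl (sub_pos.2 (Real.rpow_lt_one hx.1.le hx.2 (by linarith))).ne')
  refine intervalIntegral.integral_hasDerivAt_right
    ((intervalIntegrable_gWeight hp hq).mono_set ?_)
    measurable_gWeight.aestronglyMeasurable.stronglyMeasurableAtFilter hcont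
  rw [uIcc_of_le hx.1.le, uIcc_of_le zero_le_one]
  exact Icc_subset_Icc le_rfl hx.2.le

theorem continuousOn_gArcsin (hp : 1 < p) (hq : 1 ≤ q) :
    ContinuousOn (gArcsin p q) (Icc 0 1) := by
  rw [← uIcc_of_le zero_le_one]
  exact intervalIntegral.continuousOn_primitive_interval' (intervalIntegrable_gWeight hp hq)
    left_mem_uIcc

theorem strictMonoOn_gArcsin (hp : 1 < p) (hq : 1 ≤ q) : StrictMonoOn (gArcsin p q) (Icc 0 1) :=
  strictMonoOn_of_deriv_pos (convex_Icc 0 1) (continuousOn_gArcsin hp hq) fun x hx => by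
    rw [interior_Icc] at hx
    rw [(hasDerivAt_gArcsin hp hq hx).deriv]
    exact gWeight_pos (by linarith) (Ioo_subset_Ico_self hx)

theorem gArcsin_image_Ioo (hp : 1 < p) (hq : 1 ≤ q) :
    gArcsin p q '' Ioo 0 1 = Ioo 0 (gPi p q / 2) := by
  rw [gPi_div_two]
  nth_rw 2 [← gArcsin_zero (p := p) (q := q)]
  exact (continuousOn_gArcsin hp hq).image_Ioo_of_strictMonoOn zero_le_one
    (strictMonoOn_gArcsin hp hq)

theorem gPi_pos (hp : 1 < p) (hq : 1 ≤ q) : 0 < gPi p q := by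
  have h := strictMonoOn_gArcsin hp hq (left_mem_Icc.2 zero_le_one) (right_mem_Icc.2 zero_le_one)
    one_pos
  rw [gArcsin_zero] at h
  rw [gPi]; positivity

theorem integral_comp_gSin (hp : 1 < p) (hq : 1 ≤ q) {S : ℝ → ℝ} (hS : IsGSin p q S)
    (f : ℝ → ℝ) :
    ∫ t in (0:ℝ)..(gPi p q / 2), f (S t) = ∫ y in (0:ℝ)..1, f y * gWeight p q y := by
  rw [intervalIntegral.integral_of_le (by linarith [gPi_pos hp hq]),
    intervalIntegral.integral_of_le zero_le_one, integral_Ioc_eq_integral_Ioo,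
    integral_Ioc_eq_integral_Ioo, ← gArcsin_image_Ioo hp hq,
    integral_image_eq_integral_abs_deriv_smul measurableSet_Ioo
      (fun x hx => (hasDerivAt_gArcsin hp hq hx).hasDerivWithinAt)
      ((strictMonoOn_gArcsin hp hq).injOn.mono Ioo_subset_Icc_self)]
  refine setIntegral_congr_fun measurableSet_Ioo fun y hy => ?_
  rw [smul_eq_mul, hS y (Ioo_subset_Icc_self hy),
    abs_of_nonneg (gWeight_nonneg (by linarith) (Ioo_subset_Icc_self hy)), mul_comm]

end Weight

noncomputable def gMoment (p q k : ℝ) : ℝ := ∫ y in (0:ℝ)..1, y ^ k * gWeight p q y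

section Moments

variable {p q : ℝ}

theorem gMoment_zero : gMoment p q 0 = gPi p q / 2 := by
  simp only [gMoment, Real.rpow_zero, one_mul, gPi_div_two, gArcsin_eq_integral_gWeight]

theorem hasDerivAt_rpow_mul_one_sub_rpow_rpow (p : ℝ) (hq : 1 ≤ q) {k y : ℝ}
    (hy : y ∈ Ioo (0:ℝ) 1) :
    HasDerivAt (fun y => y ^ (k + 1) * (1 - y ^ q) ^ (1 - 1 / p))
      ((k + 1) * (y ^ k * gWeight p q y)
        - (k + 1 + q * (1 - 1 / p)) * (y ^ (k + q) * gWeight p q y)) y := by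
  have hb : 0 < 1 - y ^ q := sub_pos.2 (Real.rpow_lt_one hy.1.le hy.2 (by linarith))
  have hpow := Real.hasDerivAt_rpow_const (x := y) (p := k + 1) (Or.inl hy.1.ne')
  have hbase := (Real.hasDerivAt_rpow_const (x := y) (p := q) (Or.inl hy.1.ne')).const_sub 1
  have hroot := hbase.rpow_const (p := 1 - 1 / p) (Or.inl hb.ne')
  refine (hpow.mul hroot).congr_deriv ?_
  have hw : (1 - y ^ q) ^ (1 - 1 / p) = (1 - y ^ q) * gWeight p q y := by
    rw [gWeight, show 1 - 1 / p = 1 + -(1 / p) by ring, Real.rpow_add hb, Real.rpow_one]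
  have hw' : (1 - y ^ q) ^ (1 - 1 / p - 1) = gWeight p q y := by
    rw [gWeight]; ring_nf
  have hkq : y ^ (k + q) = y ^ k * y ^ q := Real.rpow_add hy.1 k q
  have hkq' : y ^ (k + 1) * y ^ (q - 1) = y ^ k * y ^ q := by
    rw [← Real.rpow_add hy.1, ← Real.rpow_add hy.1]; ring_nf
  simp only [add_sub_cancel_right, hw, hw', hkq]
  linear_combination (-(q * (1 - 1 / p)) * gWeight p q y) * hkq'

/-- The boundary terms of the integration by parts vanish because `1 - 1/p > 0`. -/
theorem gMoment_reduction (hp : 1 < p) (hq : 1 ≤ q) {k : ℝ} (hk : 0 ≤ k) :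
    (k + 1 + q * (1 - 1 / p)) * gMoment p q (k + q) = (k + 1) * gMoment p q k := by
  have hexp : 0 < 1 - 1 / p := by rw [sub_pos, div_lt_one (by linarith)]; exact hp
  have hintegrable := fun j (hj : 0 ≤ j) => intervalIntegrable_rpow_mul_gWeight hp hq hj
  have hcont : ContinuousOn (fun y : ℝ => y ^ (k + 1) * (1 - y ^ q) ^ (1 - 1 / p)) (Icc 0 1) :=
    ((Real.continuous_rpow_const (by linarith)).mul
      ((continuous_const.sub (Real.continuous_rpow_const (by linarith))).rpow_const
        fun _ => Or.inr hexp.le)).continuousOn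
  have hftc := intervalIntegral.integral_eq_sub_of_hasDerivAt_of_le zero_le_one hcont
    (fun y hy => hasDerivAt_rpow_mul_one_sub_rpow_rpow p hq hy)
    (((hintegrable k hk).const_mul _).sub ((hintegrable (k + q) (by linarith)).const_mul _))
  rw [intervalIntegral.integral_sub ((hintegrable k hk).const_mul _)
      ((hintegrable (k + q) (by linarith)).const_mul _),
    intervalIntegral.integral_const_mul, intervalIntegral.integral_const_mul] at hftc
  simp only [Real.one_rpow, sub_self, Real.zero_rpow hexp.ne', mul_zero,
    Real.zero_rpow (by linarith : k + 1 ≠ 0), zero_mul] at hftc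
  rw [gMoment, gMoment]
  linarith

end Moments

theorem gMoment_two_four_mul_nat (n : ℕ) :
    gMoment 2 4 (4 * n) =
      (∏ j ∈ Finset.Icc 1 n, ((4 * (j : ℝ) - 3) / (4 * (j : ℝ) - 1))) * gMoment 2 4 0 := by
  induction n with
  | zero => simp
  | succ n ih =>
    have hrec := gMoment_reduction one_lt_two (by norm_num : (1:ℝ) ≤ 4)
      (by positivity : (0:ℝ) ≤ 4 * n)
    rw [show 4 * (n:ℝ) + 4 = 4 * (n + 1) by ring] at hrec
    rw [Finset.prod_Icc_succ_top (by omega), mul_right_comm, ← ih]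
    push_cast
    have h3 : (0:ℝ) < 4 * (n + 1) - 1 := by linarith [n.cast_nonneg (α := ℝ)]
    rw [mul_div_assoc', eq_div_iff h3.ne']
    linear_combination hrec

theorem stmt_14_general (S : ℝ → ℝ) (hS : IsGSin 2 4 S) (n : ℕ) :
    ∫ t in (0:ℝ)..(gPi 2 4 / 2), S t ^ (4 * n) =
      (∏ j ∈ Finset.Icc 1 n, ((4 * (j : ℝ) - 3) / (4 * (j : ℝ) - 1))) * (gPi 2 4 / 2) := by
  rw [integral_comp_gSin one_lt_two (by norm_num) hS (· ^ (4 * n)), ← gMoment_zero,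
    ← gMoment_two_four_mul_nat]
  simp only [gMoment, ← Real.rpow_natCast]
  push_cast
  rfl

/-- Wallis-type formula for the lemniscate sine: for `n ≥ 1`,
`∫₀^{ϖ/2} sl^{4n} t dt = (1/3)(5/7)(9/11)⋯((4n-3)/(4n-1)) · ϖ/2`. -/
theorem stmt_14 (S : ℝ → ℝ) (hS : IsGSin 2 4 S) (n : ℕ) (hn : 1 ≤ n) :
    ∫ t in (0:ℝ)..(gPi 2 4 / 2), S t ^ (4 * n) =
      (∏ j ∈ Finset.Icc 1 n, ((4 * (j : ℝ) - 3) / (4 * (j : ℝ) - 1))) * (gPi 2 4 / 2) :=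
  stmt_14_general S hS n
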